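/- arXiv:1312.4395 — 2 statements merged into one kernel-verified Lean document; each statement's English description precedes it below -/
import Mathlib

section
/- Let f(z) = (1 + Σ_{i≥1} a_i z^i/i!)^n be the n-th power of an exponential formal power series over a ℚ-algebra, for a nonnegative integer n. Then the coefficient of z^i/i! in f equals Σ_{λ ⊢ i} (n)_{ℓ(λ)} d_λ a_λ, where (n)_k = n(n−1)···(n−k+1) is the falling factorial, and for λ = (1^{r_1}, 2^{r_2}, ...), d_λ = i!/((1!)^{r_1} r_1! (2!)^{r_2} r_2! ···), ℓ(λ) = r_1 + r_2 + ···, a_λ = a_1^{r_1} a_2^{r_2} ···. -/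
/-!
Truncating at degree `i`, the multinomial theorem expands `(c₀ + c₁ z + ⋯ + cᵢ zⁱ)ⁿ` over
exponent vectors `k` with `∑ kⱼ = n`, and the coefficient of `zⁱ` collects those with
`∑ j kⱼ = i`. Forgetting `k₀`, these are exactly the multiplicity vectors of the partitions of `i`
with at most `n` parts, and for such a partition `λ` the multinomial coefficient is
`n! / (k₀! ∏ kⱼ!) = (n)_{ℓ(λ)} / ∏ kⱼ!`. With `c₀ = 1` and `cⱼ = aⱼ / j!` this is the claimed
formula; partitions with more than `n` parts contribute nothing because `(n)_ℓ = 0` for `ℓ > n`.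
-/

open Finset
open scoped Nat

namespace PowerSeries

variable {R : Type*} [CommSemiring R]

theorem coeff_sum_monomial_pow (s : Finset ℕ) (c : ℕ → R) (n i : ℕ) :
    coeff i ((∑ j ∈ s, monomial j (c j)) ^ n) =
      ∑ k ∈ piAntidiag s n with ∑ j ∈ s, j * k j = i,
        (Nat.multinomial s k : R) * ∏ j ∈ s, c j ^ k j := by
  simp_rw [sum_pow_eq_sum_piAntidiag, monomial_pow, prod_monomial, map_sum, sum_filter]
  refine sum_congr rfl fun k _ => ?_
  rw [← map_natCast (C (R := R)), coeff_C_mul, coeff_monomial]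
  simp only [mul_comm (k _)]
  split_ifs <;> simp_all

theorem coeff_pow_eq_sum_piAntidiag (f : R⟦X⟧) (n i : ℕ) :
    coeff i (f ^ n) =
      ∑ k ∈ piAntidiag (range (i + 1)) n with ∑ j ∈ range (i + 1), j * k j = i,
        (Nat.multinomial (range (i + 1)) k : R) * ∏ j ∈ range (i + 1), coeff j f ^ k j := by
  rw [← coeff_coe_trunc_of_lt i.lt_succ_self, ← trunc_trunc_pow,
    coeff_coe_trunc_of_lt i.lt_succ_self, ← coeff_sum_monomial_pow, trunc_apply,
    Nat.Ico_zero_eq_range, ← Polynomial.coeToPowerSeries.ringHom_apply, map_sum]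
  simp only [Polynomial.coeToPowerSeries.ringHom_apply, Polynomial.coe_monomial]

end PowerSeries

theorem Nat.multinomial_insert_mul_prod_factorial {α : Type*} [DecidableEq α] {a : α}
    {s : Finset α} (ha : a ∉ s) (k : α → ℕ) :
    multinomial (insert a s) k * ∏ j ∈ s, (k j)! =
      (k a + ∑ j ∈ s, k j).descFactorial (∑ j ∈ s, k j) := by
  rw [multinomial_insert ha, mul_assoc, mul_comm (multinomial s k), multinomial_spec,
    descFactorial_eq_factorial_mul_choose, Nat.choose_symm_add, mul_comm]

theorem Multiset.count_sum_replicate {α : Type*} [DecidableEq α] {s : Finset α} (k : α → ℕ)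
    (x : α) :
    (∑ j ∈ s, replicate (k j) j).count x = if x ∈ s then k x else 0 := by
  simp [count_sum', count_replicate, eq_comm]

theorem Finset.range_add_one_eq_insert_zero_Icc (i : ℕ) : range (i + 1) = insert 0 (Icc 1 i) := by
  ext; simp; omega

namespace Nat.Partition

variable {i : ℕ}

/-- The exponent vector `k` of the term of `(c₀ + c₁ z + ⋯ + cᵢ zⁱ)ⁿ` indexed by `P`:
`kⱼ` is the multiplicity of `j` in `P` for `j ≠ 0`, and `k₀` makes the total `n`. -/
def countPadded (P : i.Partition) (n : ℕ) : ℕ → ℕ :=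
  Function.update (P.parts.count ·) 0 (n - Multiset.card P.parts)

theorem countPadded_zero (P : i.Partition) (n : ℕ) :
    P.countPadded n 0 = n - Multiset.card P.parts :=
  Function.update_self ..

theorem countPadded_of_ne_zero (P : i.Partition) (n : ℕ) {j : ℕ} (hj : j ≠ 0) :
    P.countPadded n j = P.parts.count j :=
  Function.update_of_ne hj ..

theorem mem_Icc_of_mem_parts (P : i.Partition) {j : ℕ} (hj : j ∈ P.parts) : j ∈ Icc 1 i :=
  mem_Icc.2 ⟨P.parts_pos hj, P.le_of_mem_parts hj⟩

theorem sum_Icc_count_parts (P : i.Partition) :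
    ∑ j ∈ Icc 1 i, P.parts.count j = Multiset.card P.parts :=
  Multiset.sum_count_eq_card fun _ => P.mem_Icc_of_mem_parts

theorem sum_Icc_mul_count_parts (P : i.Partition) :
    ∑ j ∈ Icc 1 i, j * P.parts.count j = i := by
  conv_rhs => rw [← P.parts_sum, sum_multiset_count_of_subset _ (Icc 1 i) fun _ hj =>
    P.mem_Icc_of_mem_parts (Multiset.mem_toFinset.1 hj)]
  simp only [smul_eq_mul, mul_comm]

@[to_additive]
theorem prod_Icc_countPadded {M : Type*} [CommMonoid M] (P : i.Partition) (n : ℕ)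
    (f : ℕ → ℕ → M) :
    ∏ j ∈ Icc 1 i, f j (P.countPadded n j) = ∏ j ∈ Icc 1 i, f j (P.parts.count j) :=
  prod_congr rfl fun _ hj => by
    rw [P.countPadded_of_ne_zero n (Nat.one_le_iff_ne_zero.1 (mem_Icc.1 hj).1)]

theorem countPadded_mem_piAntidiag (P : i.Partition) {n : ℕ} (hP : Multiset.card P.parts ≤ n) :
    P.countPadded n ∈ piAntidiag (range (i + 1)) n := by
  rw [mem_piAntidiag, range_add_one_eq_insert_zero_Icc, sum_insert (by simp), countPadded_zero,
    sum_Icc_countPadded P n fun _ c => c, sum_Icc_count_parts]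
  refine ⟨by omega, fun j hj => ?_⟩
  rcases eq_or_ne j 0 with rfl | hj0
  · exact mem_insert_self ..
  · rw [P.countPadded_of_ne_zero n hj0, Multiset.count_ne_zero] at hj
    exact mem_insert_of_mem (P.mem_Icc_of_mem_parts hj)

theorem sum_mul_countPadded (P : i.Partition) (n : ℕ) :
    ∑ j ∈ range (i + 1), j * P.countPadded n j = i := by
  rw [range_add_one_eq_insert_zero_Icc, sum_insert (by simp), zero_mul, zero_add,
    sum_Icc_countPadded P n fun j c => j * c, sum_Icc_mul_count_parts]

def ofCounts (k : ℕ → ℕ) (hk : ∑ j ∈ range (i + 1), j * k j = i) : i.Partition :=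
  ofSums i (∑ j ∈ range (i + 1), Multiset.replicate (k j) j) <| by
    simpa [Multiset.sum_sum, mul_comm] using hk

theorem count_ofCounts_of_ne_zero {k : ℕ → ℕ} (hk : ∑ j ∈ range (i + 1), j * k j = i) {x : ℕ}
    (hx : x ≠ 0) : (ofCounts k hk).parts.count x = if x ∈ range (i + 1) then k x else 0 := by
  rw [ofCounts, count_ofSums_of_ne_zero _ hx, Multiset.count_sum_replicate]

theorem card_ofCounts {k : ℕ → ℕ} (hk : ∑ j ∈ range (i + 1), j * k j = i) :
    Multiset.card (ofCounts k hk).parts = ∑ j ∈ Icc 1 i, k j := by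
  rw [← sum_Icc_count_parts]
  refine sum_congr rfl fun j hj => ?_
  have hj' := mem_Icc.1 hj
  rw [count_ofCounts_of_ne_zero hk (by omega), if_pos (mem_range.2 (by omega))]

theorem ofCounts_countPadded (P : i.Partition) (n : ℕ) :
    ofCounts (P.countPadded n) (P.sum_mul_countPadded n) = P := by
  ext x
  rcases eq_or_ne x 0 with rfl | hx
  · rw [ofCounts, count_ofSums_zero, eq_comm, Multiset.count_eq_zero]
    exact fun h => (P.parts_pos h).ne' rfl
  · rw [count_ofCounts_of_ne_zero _ hx, P.countPadded_of_ne_zero n hx]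
    split_ifs with hxi
    · rfl
    · refine (Multiset.count_eq_zero.2 fun h => hxi ?_).symm
      exact mem_range.2 (Nat.lt_succ_of_le (P.le_of_mem_parts h))

theorem countPadded_ofCounts {n : ℕ} {k : ℕ → ℕ} (hkn : k ∈ piAntidiag (range (i + 1)) n)
    (hk : ∑ j ∈ range (i + 1), j * k j = i) : (ofCounts k hk).countPadded n = k := by
  rw [mem_piAntidiag, range_add_one_eq_insert_zero_Icc, sum_insert (by simp)] at hkn
  funext x
  rcases eq_or_ne x 0 with rfl | hx
  · rw [countPadded_zero, card_ofCounts]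
    omega
  · rw [countPadded_of_ne_zero _ _ hx, count_ofCounts_of_ne_zero _ hx,
      range_add_one_eq_insert_zero_Icc]
    split_ifs with hxi
    · rfl
    · exact (not_imp_comm.1 (hkn.2 x) hxi).symm

theorem sum_filter_card_le_eq_sum_piAntidiag {M : Type*} [AddCommMonoid M] (n : ℕ)
    (g : (ℕ → ℕ) → M) :
    ∑ P : i.Partition with Multiset.card P.parts ≤ n, g (P.countPadded n) =
      ∑ k ∈ piAntidiag (range (i + 1)) n with ∑ j ∈ range (i + 1), j * k j = i, g k := by
  refine sum_bij' (fun P _ => P.countPadded n) (fun k hk => ofCounts k (mem_filter.1 hk).2)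
    (fun P hP => mem_filter.2 ⟨P.countPadded_mem_piAntidiag (mem_filter.1 hP).2,
      P.sum_mul_countPadded n⟩)
    (fun k hk => ?_) (fun P _ => ofCounts_countPadded P n)
    (fun k hk => countPadded_ofCounts (mem_filter.1 hk).1 _) (fun _ _ => rfl)
  obtain ⟨hkn, hk⟩ := mem_filter.1 hk
  rw [mem_piAntidiag, range_add_one_eq_insert_zero_Icc, sum_insert (by simp)] at hkn
  simp only [mem_filter, mem_univ, true_and, card_ofCounts]
  omega

theorem multinomial_countPadded_mul_prod_factorial (P : i.Partition) {n : ℕ}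
    (hP : Multiset.card P.parts ≤ n) :
    multinomial (range (i + 1)) (P.countPadded n) * ∏ j ∈ Icc 1 i, (P.parts.count j)! =
      n.descFactorial (Multiset.card P.parts) := by
  rw [range_add_one_eq_insert_zero_Icc, ← prod_Icc_countPadded P n fun _ c => c !,
    multinomial_insert_mul_prod_factorial (by simp), countPadded_zero,
    sum_Icc_countPadded P n fun _ c => c, sum_Icc_count_parts, Nat.sub_add_cancel hP]

theorem factorial_smul_multinomial_countPadded_mul_prod {R : Type*} [CommRing R] [Algebra ℚ R]
    (a : ℕ → R) (P : i.Partition) {n : ℕ} (hP : Multiset.card P.parts ≤ n) :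
    (i ! : ℚ) • ((multinomial (range (i + 1)) (P.countPadded n) : R) *
        ∏ j ∈ range (i + 1), (if j = 0 then 1 else ((j ! : ℚ)⁻¹) • a j) ^ P.countPadded n j) =
      ((n.descFactorial (Multiset.card P.parts) : ℚ) *
          ((i ! : ℚ) / ∏ j ∈ Icc 1 i, ((j ! : ℚ) ^ P.parts.count j * ((P.parts.count j)! : ℚ)))) •
        ∏ j ∈ Icc 1 i, a j ^ P.parts.count j := by
  have hprod : ∏ j ∈ range (i + 1),
      (if j = 0 then 1 else ((j ! : ℚ)⁻¹) • a j) ^ P.countPadded n j =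
        (∏ j ∈ Icc 1 i, ((j ! : ℚ)⁻¹) ^ P.parts.count j) •
          ∏ j ∈ Icc 1 i, a j ^ P.parts.count j := by
    rw [range_add_one_eq_insert_zero_Icc, prod_insert (by simp), if_pos rfl, one_pow, one_mul,
      ← prod_smul]
    refine prod_congr rfl fun j hj => ?_
    have hj0 : j ≠ 0 := Nat.one_le_iff_ne_zero.1 (mem_Icc.1 hj).1
    rw [if_neg hj0, P.countPadded_of_ne_zero n hj0, smul_pow]
  have hmult : (multinomial (range (i + 1)) (P.countPadded n) : ℚ) *
      ∏ j ∈ Icc 1 i, ((P.parts.count j)! : ℚ) = n.descFactorial (Multiset.card P.parts) := by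
    exact_mod_cast P.multinomial_countPadded_mul_prod_factorial hP
  rw [hprod, mul_smul_comm, ← nsmul_eq_mul, ← Nat.cast_smul_eq_nsmul ℚ, smul_smul, smul_smul,
    ← hmult]
  congr 1
  simp only [inv_pow, prod_inv_distrib, prod_mul_distrib]
  field_simp

end Nat.Partition

/-- For `f(z) = (1 + ∑_{i≥1} a_i z^i/i!)^n`, the coefficient of `z^i/i!` in `f`
equals `∑_{λ ⊢ i} (n)_{ℓ(λ)} d_λ a_λ`, with `(n)_k` the falling factorial. -/
theorem stmt_11 {R : Type*} [CommRing R] [Algebra ℚ R] (a : ℕ → R) (n : ℕ) :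
    ∀ i : ℕ, 1 ≤ i →
      (i.factorial : ℚ) •
          PowerSeries.coeff i
            ((PowerSeries.mk fun k =>
                if k = 0 then 1 else ((k.factorial : ℚ)⁻¹) • a k) ^ n)
        = ∑ P : Nat.Partition i,
            ((n.descFactorial (Multiset.card P.parts) : ℚ) *
                ((i.factorial : ℚ) /
                  ∏ j ∈ Finset.Icc 1 i,
                    ((j.factorial : ℚ) ^ P.parts.count j *
                      ((P.parts.count j).factorial : ℚ)))) •
              ∏ j ∈ Finset.Icc 1 i, a j ^ P.parts.count j := by
  intro i _
  rw [PowerSeries.coeff_pow_eq_sum_piAntidiag,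
    ← Nat.Partition.sum_filter_card_le_eq_sum_piAntidiag, smul_sum]
  refine (sum_congr rfl fun P hP => ?_).trans (sum_filter_of_ne fun P _ h => ?_)
  · simp only [PowerSeries.coeff_mk]
    exact P.factorial_smul_multinomial_countPadded_mul_prod a (mem_filter.1 hP).2
  · by_contra hP
    simp [Nat.descFactorial_eq_zero_iff_lt.2 (not_le.1 hP)] at h
end

section
/- Let Σ, M be p × p complex matrices with Σ Hermitian positive definite, let Ω = Σ^{-1} M, and let f(z) = exp(−Tr[(I − zΣ)^{-1} Σ Ω z]) · det(I − zΣ)^{-n} as a formal power series in z (the moment generating function of Tr W(n) for the non-central Wishart distribution W_p(n, Σ, M)). Then the i-th formal cumulant of f equals n (i−1)! Tr(Σ^i) − i! Tr(M Σ^{i−1}) for every i ≥ 1. -/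
open PowerSeries
open scoped ComplexOrder

/-- Formal exponential of a power series with zero constant term. -/
noncomputable def expComp {R : Type*} [CommRing R] [Algebra ℚ R]
    (f : PowerSeries R) : PowerSeries R :=
  PowerSeries.mk fun n =>
    ∑ k ∈ Finset.range (n + 1), ((k.factorial : ℚ)⁻¹) • PowerSeries.coeff (R := R) n (f ^ k)

/-!
`expComp` turns sums of series without constant term into products: `expComp f` is `exp`
substituted into `f`, so it solves `E' = f' E`, and `expComp (f + g) * expComp (-f) * expComp (-g)`
has derivative zero. The resolvent is `(1 - X S)⁻¹ = ∑ₖ Sᵏ Xᵏ`, so the exponent equals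
`-∑ₖ Tr (M Sᵏ⁻¹) Xᵏ`. Diagonalising the Hermitian `S` gives
`det (1 - X S)⁻¹ = ∏ⱼ (1 - λⱼ X)⁻¹ = ∏ⱼ expComp (∑ₖ λⱼᵏ Xᵏ / k) = expComp (∑ₖ Tr (Sᵏ) Xᵏ / k)`,
the middle step again because the product of the two sides has derivative zero.
-/

namespace PowerSeries

theorem coeff_pow_eq_zero_of_lt {R : Type*} [CommSemiring R] {f : R⟦X⟧}
    (hf : constantCoeff f = 0) {n k : ℕ} (h : n < k) : coeff n (f ^ k) = 0 :=
  X_pow_dvd_iff.mp (pow_dvd_pow_of_dvd (X_dvd_iff.mpr hf) k) n h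

theorem mk_pow_mul_one_sub_C_mul_X {R : Type*} [CommRing R] (a : R) :
    mk (fun n => a ^ n) * (1 - C a * X) = 1 := by
  simpa [rescale_mk, rescale_X] using congrArg (rescale a) (mk_one_mul_one_sub_eq_one R)

section ExpComp

variable {R : Type*} [CommRing R] [Algebra ℚ R]

theorem expComp_eq_subst_exp {f : R⟦X⟧} (hf : constantCoeff f = 0) :
    expComp f = (exp R).subst f := by
  ext n
  rw [expComp, coeff_mk, coeff_subst' (HasSubst.of_constantCoeff_zero' hf),
    finsum_eq_sum_of_support_subset (s := Finset.range (n + 1))]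
  · refine Finset.sum_congr rfl fun k _ => ?_
    rw [coeff_exp, algebraMap_smul, one_div]
  · intro k hk
    rw [Function.mem_support] at hk
    rw [Finset.coe_range, Set.mem_Iio]
    by_contra! hnk
    exact hk (by rw [coeff_pow_eq_zero_of_lt hf (Nat.lt_of_succ_le hnk), smul_zero])

theorem constantCoeff_expComp (f : R⟦X⟧) : constantCoeff (expComp f) = 1 := by
  simp [expComp]

theorem derivative_expComp {f : R⟦X⟧} (hf : constantCoeff f = 0) :
    d⁄dX R (expComp f) = expComp f * d⁄dX R f := by
  rw [expComp_eq_subst_exp hf, derivative_subst (HasSubst.of_constantCoeff_zero' hf),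
    derivative_exp]

theorem eq_one_of_derivative_eq_zero {g : R⟦X⟧} (hd : d⁄dX R g = 0)
    (hc : constantCoeff g = 1) : g = 1 :=
  haveI := IsAddTorsionFree.of_module_rat R
  derivative.ext (by rw [hd, derivative_one]) (by rw [hc, map_one])

theorem expComp_zero : expComp (0 : R⟦X⟧) = 1 :=
  eq_one_of_derivative_eq_zero (by rw [derivative_expComp (map_zero _), map_zero, mul_zero])
    (constantCoeff_expComp 0)

theorem expComp_mul_expComp_neg {f : R⟦X⟧} (hf : constantCoeff f = 0) :
    expComp f * expComp (-f) = 1 := by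
  have hf' : constantCoeff (-f) = 0 := by rw [map_neg, hf, neg_zero]
  refine eq_one_of_derivative_eq_zero ?_ ?_
  · rw [Derivation.leibniz, derivative_expComp hf, derivative_expComp hf', map_neg, smul_eq_mul,
      smul_eq_mul]
    ring
  · rw [map_mul, constantCoeff_expComp, constantCoeff_expComp, one_mul]

theorem expComp_add {f g : R⟦X⟧} (hf : constantCoeff f = 0) (hg : constantCoeff g = 0) :
    expComp (f + g) = expComp f * expComp g := by
  have hfg : constantCoeff (f + g) = 0 := by rw [map_add, hf, hg, add_zero]
  have hf' : constantCoeff (-f) = 0 := by rw [map_neg, hf, neg_zero]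
  have hg' : constantCoeff (-g) = 0 := by rw [map_neg, hg, neg_zero]
  have hprod : expComp (f + g) * expComp (-f) * expComp (-g) = 1 := by
    refine eq_one_of_derivative_eq_zero ?_ ?_
    · simp only [Derivation.leibniz, smul_eq_mul, derivative_expComp hf', derivative_expComp hg',
        derivative_expComp hfg, map_neg, map_add]
      ring
    · simp only [map_mul, constantCoeff_expComp, one_mul]
  linear_combination (expComp f * expComp g) * hprod - (expComp (f + g) * expComp (-g) *
    expComp g) * expComp_mul_expComp_neg hf - expComp (f + g) * expComp_mul_expComp_neg hg

theorem expComp_sum {ι : Type*} (s : Finset ι) {f : ι → R⟦X⟧}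
    (hf : ∀ i ∈ s, constantCoeff (f i) = 0) :
    expComp (∑ i ∈ s, f i) = ∏ i ∈ s, expComp (f i) := by
  classical
  induction s using Finset.induction_on with
  | empty => rw [Finset.sum_empty, Finset.prod_empty, expComp_zero]
  | insert j s hj ih =>
    rw [Finset.forall_mem_insert] at hf
    rw [Finset.sum_insert hj, Finset.prod_insert hj, ← ih hf.2,
      expComp_add hf.1 (by rw [map_sum]; exact Finset.sum_eq_zero hf.2)]

theorem expComp_nsmul {f : R⟦X⟧} (hf : constantCoeff f = 0) (k : ℕ) :
    expComp (k • f) = expComp f ^ k := by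
  simpa using expComp_sum (Finset.range k) (fun _ _ => hf)

end ExpComp

section NegLog

variable {R : Type*} [CommRing R] [Algebra ℚ R]

/-- `-log (1 - a X)`; the coefficient at `i = 0` vanishes because `(0 : ℚ)⁻¹ = 0`. -/
noncomputable def negLogOneSub (a : R) : R⟦X⟧ :=
  mk fun i => (i : ℚ)⁻¹ • a ^ i

theorem constantCoeff_negLogOneSub (a : R) : constantCoeff (negLogOneSub a) = 0 := by
  simp [negLogOneSub]

theorem derivative_negLogOneSub (a : R) :
    d⁄dX R (negLogOneSub a) = C a * mk fun n => a ^ n := by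
  ext n
  rw [coeff_derivative, negLogOneSub, coeff_mk, coeff_C_mul, coeff_mk, ← pow_succ',
    ← Nat.cast_succ, mul_comm, ← nsmul_eq_mul, ← Nat.cast_smul_eq_nsmul ℚ, smul_smul,
    mul_inv_cancel₀ (Nat.cast_ne_zero.mpr (Nat.succ_ne_zero n)), one_smul]

theorem expComp_negLogOneSub_mul (a : R) : expComp (negLogOneSub a) * (1 - C a * X) = 1 := by
  refine eq_one_of_derivative_eq_zero ?_ ?_
  · rw [Derivation.leibniz, derivative_expComp (constantCoeff_negLogOneSub a),
      derivative_negLogOneSub, map_sub, derivative_one, Derivation.leibniz, derivative_X,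
      derivative_C]
    linear_combination (C a * expComp (negLogOneSub a)) * mk_pow_mul_one_sub_C_mul_X a
  · rw [map_mul, constantCoeff_expComp]
    simp

end NegLog

end PowerSeries

namespace Matrix

open PowerSeries

variable {ι R : Type*} [Fintype ι] [DecidableEq ι] [CommRing R]

noncomputable def geomSeries (S : Matrix ι ι R) : Matrix ι ι R⟦X⟧ :=
  of fun i j => mk fun k => (S ^ k) i j

theorem map_coeff_map_C_mul {l m n : Type*} [Fintype m] (A : Matrix l m R)
    (G : Matrix m n R⟦X⟧) (k : ℕ) : (A.map C * G).map (coeff k) = A * G.map (coeff k) := by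
  ext i j
  simp only [map_apply, mul_apply, map_sum, coeff_C_mul]

theorem map_coeff_geomSeries (S : Matrix ι ι R) (k : ℕ) :
    (geomSeries S).map (coeff k) = S ^ k := by
  ext i j
  simp [geomSeries]

theorem one_sub_X_smul_map_C_mul_geomSeries (S : Matrix ι ι R) :
    (1 - (X : R⟦X⟧) • S.map C) * geomSeries S = 1 := by
  ext i j k
  rw [sub_mul, one_mul, smul_mul, sub_apply, smul_apply, smul_eq_mul, map_sub]
  cases k with
  | zero => simp [geomSeries, one_apply, apply_ite (coeff 0)]
  | succ k =>
    rw [coeff_succ_X_mul, ← map_apply (f := coeff k), map_coeff_map_C_mul, map_coeff_geomSeries,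
      ← pow_succ']
    simp [geomSeries, one_apply, apply_ite (coeff (k + 1))]

theorem inv_one_sub_X_smul_map_C (S : Matrix ι ι R) :
    (1 - (X : R⟦X⟧) • S.map C)⁻¹ = geomSeries S :=
  inv_eq_right_inv (one_sub_X_smul_map_C_mul_geomSeries S)

theorem trace_geomSeries_mul_map_C (S M : Matrix ι ι R) :
    trace (geomSeries S * M.map C) = mk fun k => trace (M * S ^ k) := by
  ext k
  rw [coeff_mk, trace_mul_comm, AddMonoidHom.map_trace (coeff k), map_coeff_map_C_mul,
    map_coeff_geomSeries]

theorem trace_inv_one_sub_X_smul_map_C_mul {S : Matrix ι ι R} (hS : IsUnit S.det)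
    (M : Matrix ι ι R) :
    trace ((1 - (X : R⟦X⟧) • S.map C)⁻¹ * S.map C * (S⁻¹ * M).map C * ((X : R⟦X⟧) • 1)) =
      X * mk fun k => trace (M * S ^ k) := by
  rw [inv_one_sub_X_smul_map_C, Matrix.mul_assoc (geomSeries S), ← Matrix.map_mul,
    ← Matrix.mul_assoc, mul_nonsing_inv S hS, Matrix.one_mul, Matrix.mul_smul, Matrix.mul_one,
    trace_smul, smul_eq_mul, trace_geomSeries_mul_map_C]

theorem det_one_sub_X_smul_map_C_units_conj (U : (Matrix ι ι R)ˣ) (A : Matrix ι ι R) :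
    det (1 - (X : R⟦X⟧) • (U.val * A * U⁻¹.val).map C) =
      det (1 - (X : R⟦X⟧) • A.map C) := by
  let V := Units.map (C : R →+* R⟦X⟧).mapMatrix.toMonoidHom U
  have hconj : 1 - (X : R⟦X⟧) • (U.val * A * U⁻¹.val).map C =
      V.val * (1 - (X : R⟦X⟧) • A.map C) * V⁻¹.val := by
    rw [Matrix.mul_sub, Matrix.sub_mul, Matrix.mul_one, V.mul_inv, Matrix.mul_smul,
      Matrix.smul_mul, Matrix.map_mul, Matrix.map_mul]
    rfl
  rw [hconj, det_units_conj]

theorem det_one_sub_X_smul_map_C_diagonal (d : ι → R) :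
    det (1 - (X : R⟦X⟧) • (diagonal d).map C) = ∏ i, (1 - C (d i) * X) := by
  rw [diagonal_map (map_zero C), ← diagonal_smul, ← diagonal_one, diagonal_sub, det_diagonal]
  simp only [Pi.smul_apply, smul_eq_mul, mul_comm X]

theorem trace_pow_units_conj (U : (Matrix ι ι R)ˣ) (A : Matrix ι ι R) (k : ℕ) :
    trace ((U.val * A * U⁻¹.val) ^ k) = trace (A ^ k) := by
  rw [Units.conj_pow, trace_mul_cycle, U.inv_mul, Matrix.one_mul]

end Matrix

namespace Matrix.IsHermitian

open PowerSeries

variable {ι 𝕜 : Type*} [Fintype ι] [DecidableEq ι] [RCLike 𝕜] {S : Matrix ι ι 𝕜}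

theorem eq_units_conj_diagonal (hS : S.IsHermitian) :
    S = (Unitary.toUnits hS.eigenvectorUnitary).val *
      diagonal (RCLike.ofReal ∘ hS.eigenvalues) * (Unitary.toUnits hS.eigenvectorUnitary)⁻¹.val :=
  hS.spectral_theorem

theorem det_one_sub_X_smul_map_C (hS : S.IsHermitian) :
    det (1 - (X : 𝕜⟦X⟧) • S.map C) = ∏ j, (1 - C (hS.eigenvalues j : 𝕜) * X) := by
  conv_lhs => rw [hS.eq_units_conj_diagonal]
  rw [det_one_sub_X_smul_map_C_units_conj, det_one_sub_X_smul_map_C_diagonal]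
  rfl

theorem trace_pow (hS : S.IsHermitian) (k : ℕ) :
    trace (S ^ k) = ∑ j, (hS.eigenvalues j : 𝕜) ^ k := by
  conv_lhs => rw [hS.eq_units_conj_diagonal]
  rw [trace_pow_units_conj, diagonal_pow, trace_diagonal]
  rfl

theorem inv_det_one_sub_X_smul_map_C (hS : S.IsHermitian) :
    (det (1 - (X : 𝕜⟦X⟧) • S.map C))⁻¹ = expComp (mk fun k => (k : ℚ)⁻¹ • trace (S ^ k)) := by
  set L : 𝕜⟦X⟧ := mk fun k => (k : ℚ)⁻¹ • trace (S ^ k)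
  have hlog : L = ∑ j, negLogOneSub (hS.eigenvalues j : 𝕜) := by
    ext k
    simp [L, negLogOneSub, hS.trace_pow, Finset.smul_sum]
  have hmul : expComp L * det (1 - (X : 𝕜⟦X⟧) • S.map C) = 1 := by
    rw [hlog, expComp_sum _ fun j _ => constantCoeff_negLogOneSub _, hS.det_one_sub_X_smul_map_C,
      ← Finset.prod_mul_distrib]
    exact Finset.prod_eq_one fun j _ => expComp_negLogOneSub_mul _
  have hdet : constantCoeff (det (1 - (X : 𝕜⟦X⟧) • S.map C)) ≠ 0 :=
    right_ne_zero_of_mul_eq_one (by simpa using congrArg constantCoeff hmul)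
  rwa [PowerSeries.inv_eq_iff_mul_eq_one hdet]

end Matrix.IsHermitian

theorem stmt_18_general (p n : ℕ)
    (S M : Matrix (Fin p) (Fin p) ℂ) (hS : S.PosDef) :
    expComp (-Matrix.trace
          ((1 - (X : PowerSeries ℂ) • S.map (C (R := ℂ)))⁻¹ * S.map (C (R := ℂ)) *
            (S⁻¹ * M).map (C (R := ℂ)) * ((X : PowerSeries ℂ) • 1))) *
        ((Matrix.det (1 - (X : PowerSeries ℂ) • S.map (C (R := ℂ))))⁻¹) ^ n
      = expComp (PowerSeries.mk fun i =>
          if i = 0 then 0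
          else (n : ℂ) * (i : ℂ)⁻¹ * Matrix.trace (S ^ i) -
            Matrix.trace (M * S ^ (i - 1))) := by
  rw [Matrix.trace_inv_one_sub_X_smul_map_C_mul ((Matrix.isUnit_iff_isUnit_det S).mp hS.isUnit),
    hS.1.inv_det_one_sub_X_smul_map_C, ← expComp_nsmul (by simp),
    ← expComp_add (by simp) (by simp)]
  congr 1
  ext (_ | i)
  · simp
  · rw [map_add, map_neg, coeff_succ_X_mul, map_nsmul, coeff_mk, coeff_mk, coeff_mk,
      if_neg i.succ_ne_zero, Nat.add_sub_cancel, nsmul_eq_mul, Rat.smul_def]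
    push_cast
    ring

/-- The `i`-th formal cumulant of the moment generating function
`f(z) = exp(−Tr[(I − zΣ)⁻¹ Σ Ω z]) · det(I − zΣ)^{−n}` of the trace of the
non-central Wishart distribution `W_p(n, Σ, M)`, with `Ω = Σ⁻¹ M`, equals
`n (i−1)! Tr(Σ^i) − i! Tr(M Σ^{i−1})`; equivalently the coefficient of `z^i`
in `log f` is `n Tr(Σ^i)/i − Tr(M Σ^{i−1})`. -/
theorem stmt_18 (p n : ℕ) (hp : 0 < p) (hn : 0 < n)
    (S M : Matrix (Fin p) (Fin p) ℂ) (hS : S.PosDef) :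
    expComp (-Matrix.trace
          ((1 - (X : PowerSeries ℂ) • S.map (C (R := ℂ)))⁻¹ * S.map (C (R := ℂ)) *
            (S⁻¹ * M).map (C (R := ℂ)) * ((X : PowerSeries ℂ) • 1))) *
        ((Matrix.det (1 - (X : PowerSeries ℂ) • S.map (C (R := ℂ))))⁻¹) ^ n
      = expComp (PowerSeries.mk fun i =>
          if i = 0 then 0
          else (n : ℂ) * (i : ℂ)⁻¹ * Matrix.trace (S ^ i) -
            Matrix.trace (M * S ^ (i - 1))) :=
  stmt_18_general p n S M hS
end
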